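/- Let a < b be real numbers, N ≥ 1 a natural number, and let R_1, …, R_N be independent random variables each uniformly distributed on [a, b]. Then for every δ ∈ (0, 1), with probability at least 1 − δ², |a/N + b − ((N + 1)/N) · max_{1 ≤ n ≤ N} R_n| ≤ (b − a)(N + 1)/(N²·δ). -/

import Mathlib

/-!
Almost surely every `R n` lies in `[a, b]`, so the maximum `M` is at most `b`, and the estimator
`(N + 1)/N · M` misses `a/N + b` by more than the stated bound only if `M` falls below
`t = (a + N b)/(N + 1) - (b - a)/(N δ)`. By independence,
`P(M < t) = ((t - a)/(b - a))^N ≤ (1 - 1/(N δ))^N ≤ exp(-1/δ) ≤ δ²`.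
-/

open MeasureTheory ProbabilityTheory Set Real

lemma sq_le_exp {x : ℝ} (hx : 0 ≤ x) : x ^ 2 ≤ exp x := by
  have hhalf : x ≤ exp (x / 2) := by
    nlinarith [quadratic_le_exp_of_nonneg (by positivity : (0 : ℝ) ≤ x / 2)]
  calc x ^ 2 ≤ exp (x / 2) ^ 2 := pow_le_pow_left₀ hx hhalf 2
    _ = exp x := by rw [← exp_nat_mul]; ring_nf

lemma exp_neg_inv_le_sq {δ : ℝ} (hδ : 0 < δ) : exp (-δ⁻¹) ≤ δ ^ 2 := by
  rw [exp_neg, ← inv_inv (δ ^ 2), ← inv_pow]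
  exact inv_anti₀ (by positivity) (sq_le_exp (inv_nonneg.mpr hδ.le))

/-- `(a + N b)/(N + 1)` is the mean of the maximum of `N` independent uniforms on `[a, b]`. -/
noncomputable def maxLowerThreshold (a b N δ : ℝ) : ℝ :=
  (a + N * b) / (N + 1) - (b - a) / (N * δ)

lemma maxLowerThreshold_sub_div_le_exp {a b N δ : ℝ} (hab : a < b) (hN : 0 ≤ N) :
    (maxLowerThreshold a b N δ - a) / (b - a) ≤ exp (-(N * δ)⁻¹) := by
  have hba : b - a ≠ 0 := (sub_pos.mpr hab).ne'
  have hN1 : N + 1 ≠ 0 := by positivity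
  have hmean : (a + N * b) / (N + 1) - a = (b - a) * (N / (N + 1)) := by
    field_simp
    ring
  have hquot : (maxLowerThreshold a b N δ - a) / (b - a) = N / (N + 1) - (N * δ)⁻¹ := by
    rw [maxLowerThreshold, sub_right_comm, hmean, sub_div, mul_div_cancel_left₀ _ hba,
      div_div_cancel_left' hba]
  have hfrac : N / (N + 1) ≤ 1 := (div_le_one (by linarith)).mpr (by linarith)
  linarith [add_one_le_exp (-(N * δ)⁻¹)]

lemma abs_scaled_max_sub_le {a b S N δ : ℝ} (hab : a ≤ b) (hN : 0 < N) (hδ0 : 0 < δ)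
    (hδ1 : δ ≤ 1) (hSb : S ≤ b) (hSt : maxLowerThreshold a b N δ ≤ S) :
    |a / N + b - ((N + 1) / N) * S| ≤ (b - a) * (N + 1) / (N ^ 2 * δ) := by
  have hscale : 0 < (N + 1) / N := by positivity
  have hlhs : a / N + b - ((N + 1) / N) * S = ((N + 1) / N) * ((a + N * b) / (N + 1) - S) := by
    field_simp
  have hrhs : (b - a) * (N + 1) / (N ^ 2 * δ) = ((N + 1) / N) * ((b - a) / (N * δ)) := by
    field_simp
  have hcentre : b - (a + N * b) / (N + 1) ≤ (b - a) / (N * δ) := by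
    rw [show b - (a + N * b) / (N + 1) = (b - a) / (N + 1) by field_simp; ring]
    exact div_le_div_of_nonneg_left (by linarith) (by positivity) (by nlinarith)
  rw [maxLowerThreshold] at hSt
  rw [hlhs, hrhs, abs_mul, abs_of_pos hscale]
  gcongr
  rw [abs_le]
  constructor <;> linarith

section Probability

variable {Ω : Type*} [MeasurableSpace Ω] {P : Measure Ω}

lemma one_sub_le_toReal_of_measure_compl_le [IsProbabilityMeasure P] {s : Set Ω} {ε : ℝ}
    (hε : 0 ≤ ε) (h : P sᶜ ≤ ENNReal.ofReal ε) : 1 - ε ≤ (P s).toReal := by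
  have hunion : 1 ≤ P.real s + P.real sᶜ := by
    simpa using measureReal_union_le (μ := P) s sᶜ
  have hcompl : P.real sᶜ ≤ ε := ENNReal.toReal_le_of_le_ofReal hε h
  rw [← measureReal_def]
  linarith

lemma isUniform_Icc_iff {X : Ω → ℝ} {a b : ℝ} :
    pdf.IsUniform X (Icc a b) P ↔
      Measure.map X P = (ENNReal.ofReal (b - a))⁻¹ • volume.restrict (Icc a b) := by
  rw [pdf.IsUniform, ProbabilityTheory.cond, Real.volume_Icc]

lemma MeasureTheory.pdf.IsUniform.ae_mem {E : Type*} [MeasurableSpace E] {μ : Measure E}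
    {X : Ω → E} {s : Set E} (hs : MeasurableSet s) (hns : μ s ≠ 0) (hnt : μ s ≠ ⊤)
    (hu : pdf.IsUniform X s P μ) : ∀ᵐ ω ∂P, X ω ∈ s :=
  ae_of_ae_map (hu.aemeasurable hns hnt) (hu ▸ ae_cond_mem hs)

lemma MeasureTheory.pdf.IsUniform.measure_preimage_Iio_le {X : Ω → ℝ} {a b : ℝ} (hab : a < b)
    (hu : pdf.IsUniform X (Icc a b) P) (t : ℝ) :
    P (X ⁻¹' Iio t) ≤ ENNReal.ofReal ((t - a) / (b - a)) := by
  rw [hu.measure_preimage (by simp [hab]) (by simp) measurableSet_Iio, Real.volume_Icc,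
    ENNReal.ofReal_div_of_pos (sub_pos.mpr hab)]
  gcongr
  calc volume (Icc a b ∩ Iio t) ≤ volume (Icc a t) :=
        measure_mono fun x hx => ⟨hx.1.1, hx.2.le⟩
    _ = ENNReal.ofReal (t - a) := Real.volume_Icc

lemma measure_forall_lt_le_pow {ι : Type*} [Fintype ι] {R : ι → Ω → ℝ} {a b : ℝ} (hab : a < b)
    (hu : ∀ n, pdf.IsUniform (R n) (Icc a b) P) (hindep : iIndepFun R P) (t : ℝ) :
    P {ω | ∀ n, R n ω < t} ≤ ENNReal.ofReal ((t - a) / (b - a)) ^ Fintype.card ι := by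
  have hinter : {ω | ∀ n, R n ω < t} = ⋂ n, R n ⁻¹' Iio t := by ext; simp
  rw [hinter, hindep.meas_iInter fun n => ⟨Iio t, measurableSet_Iio, rfl⟩]
  calc ∏ n, P (R n ⁻¹' Iio t) ≤ ∏ _n : ι, ENNReal.ofReal ((t - a) / (b - a)) :=
        Finset.prod_le_prod' fun n _ => (hu n).measure_preimage_Iio_le hab t
    _ = _ := by rw [Finset.prod_const, Finset.card_univ]

end Probability

theorem concentration_scaled_max_iid_uniform_general
    {Ω : Type*} [MeasurableSpace Ω] (P : Measure Ω) [IsProbabilityMeasure P]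
    (a b : ℝ) (hab : a < b) (N : ℕ) (hN : 1 ≤ N)
    (R : Fin N → Ω → ℝ)
    (hunif : ∀ n, Measure.map (R n) P
      = (ENNReal.ofReal (b - a))⁻¹ • volume.restrict (Set.Icc a b))
    (hindep : iIndepFun R P)
    (δ : ℝ) (hδ : δ ∈ Set.Ioo (0 : ℝ) 1) :
    1 - δ ^ 2 ≤
      (P {ω | |a / N + b - ((N + 1) / N) * (⨆ n, R n ω)|
        ≤ (b - a) * (N + 1) / (N ^ 2 * δ)}).toReal := by
  obtain ⟨hδ0, hδ1⟩ := hδ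
  have hN0 : (0 : ℝ) < N := Nat.cast_pos.mpr hN
  have : Nonempty (Fin N) := ⟨⟨0, hN⟩⟩
  have hu n : pdf.IsUniform (R n) (Icc a b) P := isUniform_Icc_iff.mpr (hunif n)
  set t := maxLowerThreshold a b N δ
  refine one_sub_le_toReal_of_measure_compl_le (sq_nonneg δ)
    ((measure_mono_ae (t := {ω | ∀ n, R n ω < t}) ?_).trans ?_)
  · have hae : ∀ᵐ ω ∂P, ∀ n, R n ω ∈ Icc a b :=
      ae_all_iff.mpr fun n => (hu n).ae_mem measurableSet_Icc (by simp [hab]) (by simp)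
    filter_upwards [hae] with ω hω hfar
    show ∀ n, R n ω < t
    by_contra! ⟨n, hn⟩
    exact hfar <| abs_scaled_max_sub_le hab.le hN0 hδ0 hδ1.le (ciSup_le fun m => (hω m).2)
      (hn.trans (le_ciSup (finite_range fun m => R m ω).bddAbove n))
  · calc P {ω | ∀ n, R n ω < t} ≤ ENNReal.ofReal ((t - a) / (b - a)) ^ N := by
          simpa using measure_forall_lt_le_pow hab hu hindep t
      _ ≤ ENNReal.ofReal (exp (-(N * δ)⁻¹)) ^ N := by
          gcongr
          exact maxLowerThreshold_sub_div_le_exp hab hN0.le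
      _ = ENNReal.ofReal (exp (-δ⁻¹)) := by
          rw [← ENNReal.ofReal_pow (exp_pos _).le, ← exp_nat_mul]
          field_simp
      _ ≤ ENNReal.ofReal (δ ^ 2) := ENNReal.ofReal_le_ofReal (exp_neg_inv_le_sq hδ0)

theorem concentration_scaled_max_iid_uniform
    {Ω : Type*} [MeasurableSpace Ω] (P : Measure Ω) [IsProbabilityMeasure P]
    (a b : ℝ) (hab : a < b) (N : ℕ) (hN : 1 ≤ N)
    (R : Fin N → Ω → ℝ) (hmeas : ∀ n, Measurable (R n))
    (hunif : ∀ n, Measure.map (R n) P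
      = (ENNReal.ofReal (b - a))⁻¹ • volume.restrict (Set.Icc a b))
    (hindep : iIndepFun R P)
    (δ : ℝ) (hδ : δ ∈ Set.Ioo (0 : ℝ) 1) :
    1 - δ ^ 2 ≤
      (P {ω | |a / N + b - ((N + 1) / N) * (⨆ n, R n ω)|
        ≤ (b - a) * (N + 1) / (N ^ 2 * δ)}).toReal :=
  concentration_scaled_max_iid_uniform_general P a b hab N hN R hunif hindep δ hδ
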